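/- arXiv:1803.09779 — 7 statements merged into one kernel-verified Lean document; each statement's English description precedes it below -/
import Mathlib

section
/- The intersection over all pairs of infinite matrices A, C of the sets G₂(A,C) = {B : AB and BC are defined} equals the set of row and column finite matrices. -/
open Set

def ProdDef {F : Type*} [Field F] (A B : ℕ → ℕ → F) : Prop :=
  ∀ i k, {j | A i j * B j k ≠ 0}.Finite

noncomputable def mmul {F : Type*} [Field F] (A B : ℕ → ℕ → F) : ℕ → ℕ → F :=
  fun i k => ∑ᶠ j, A i j * B j k

def RowFin {F : Type*} [Field F] (A : ℕ → ℕ → F) : Prop := ∀ i, {j | A i j ≠ 0}.Finite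

def ColFin {F : Type*} [Field F] (A : ℕ → ℕ → F) : Prop := ∀ j, {i | A i j ≠ 0}.Finite

/-- A family of vectors `V j`, summable iff each coordinate has finite support over `j`. -/
def Summab {F : Type*} [Field F] (V : ℕ → ℕ → F) : Prop := ∀ i, {j | V j i ≠ 0}.Finite

/-- Condition (D): the family of rank-one matrices `A_{*j} b_{jk} C_{k*}` is summable. -/
def CondD {F : Type*} [Field F] (A B C : ℕ → ℕ → F) : Prop :=
  ∀ i l, {p : ℕ × ℕ | A i p.1 * B p.1 p.2 * C p.2 l ≠ 0}.Finite

theorem stmt6 {F : Type*} [Field F] :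
    {B : ℕ → ℕ → F | ∀ A C : ℕ → ℕ → F, ProdDef A B ∧ ProdDef B C} =
      {B | RowFin B ∧ ColFin B} := by
  ext B
  simp only [mem_setOf_eq]
  constructor
  · intro h
    constructor
    · intro i
      have := (h (fun _ _ => 1) (fun _ _ => 1)).2 i 0
      simpa using this
    · intro j
      have := (h (fun _ _ => 1) (fun _ _ => 1)).1 0 j
      simpa using this
  · rintro ⟨hr, hc⟩ A C
    constructor
    · intro i k
      exact (hc k).subset fun j hj => fun h => hj (by simp [h])
    · intro i k
      exact (hr i).subset fun j hj => fun h => hj (by simp [h])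
end

section
/- The intersection over all pairs of infinite matrices A, C of the sets G₄(A,C) = {B : AB, BC, A(BC), and (AB)C are all defined} equals the set of finitely supported matrices (matrices with only finitely many nonzero entries). -/
open Set

-- step lemma: can pick a nonzero entry avoiding a finite set of previous rows/cols
lemma step_pick {F : Type*} [Field F] (B : ℕ → ℕ → F)
    (hR : ∀ i, {j | B i j ≠ 0}.Finite) (hC : ∀ j, {i | B i j ≠ 0}.Finite)
    (hS : {p : ℕ × ℕ | B p.1 p.2 ≠ 0}.Infinite) (T : Finset (ℕ × ℕ)) :
    ∃ p : ℕ × ℕ, B p.1 p.2 ≠ 0 ∧ ∀ q ∈ T, B p.1 q.2 = 0 ∧ B q.1 p.2 = 0 := by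
  have hbad : ∀ q : ℕ × ℕ,
      ({p : ℕ × ℕ | B p.1 p.2 ≠ 0} ∩ ({p | B p.1 q.2 ≠ 0} ∪ {p | B q.1 p.2 ≠ 0})).Finite := by
    intro q
    have h1 : ({p : ℕ × ℕ | B p.1 p.2 ≠ 0} ∩ {p | B p.1 q.2 ≠ 0}).Finite := by
      have hsub : ({p : ℕ × ℕ | B p.1 p.2 ≠ 0} ∩ {p | B p.1 q.2 ≠ 0}) ⊆
          ⋃ i ∈ {i | B i q.2 ≠ 0}, (fun j => (i, j)) '' {j | B i j ≠ 0} := by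
        rintro ⟨a, b⟩ ⟨h1, h2⟩
        simp only [mem_iUnion]
        exact ⟨a, h2, b, h1, rfl⟩
      exact Finite.subset (Finite.biUnion (hC q.2) (fun i _ => (hR i).image _)) hsub
    have h2 : ({p : ℕ × ℕ | B p.1 p.2 ≠ 0} ∩ {p | B q.1 p.2 ≠ 0}).Finite := by
      have hsub : ({p : ℕ × ℕ | B p.1 p.2 ≠ 0} ∩ {p | B q.1 p.2 ≠ 0}) ⊆
          ⋃ j ∈ {j | B q.1 j ≠ 0}, (fun i => (i, j)) '' {i | B i j ≠ 0} := by
        rintro ⟨a, b⟩ ⟨h1, h2⟩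
        simp only [mem_iUnion]
        exact ⟨b, h2, a, h1, rfl⟩
      exact Finite.subset (Finite.biUnion (hR q.1) (fun j _ => (hC j).image _)) hsub
    have := h1.union h2
    exact this.subset (by rw [inter_union_distrib_left])
  have hBig : ({p : ℕ × ℕ | B p.1 p.2 ≠ 0} ∩
      ⋃ q ∈ T, ({p : ℕ × ℕ | B p.1 q.2 ≠ 0} ∪ {p | B q.1 p.2 ≠ 0})).Finite := by
    rw [inter_iUnion₂]
    exact Finite.biUnion T.finite_toSet (fun q _ => hbad q)
  have : ({p : ℕ × ℕ | B p.1 p.2 ≠ 0} \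
      ⋃ q ∈ T, ({p : ℕ × ℕ | B p.1 q.2 ≠ 0} ∪ {p | B q.1 p.2 ≠ 0})).Infinite := by
    intro hfin
    exact hS (by
      have := hfin.union hBig
      exact this.subset (fun p hp => by
        by_cases h : p ∈ ⋃ q ∈ T, ({p : ℕ × ℕ | B p.1 q.2 ≠ 0} ∪ {p | B q.1 p.2 ≠ 0})
        · exact Or.inr ⟨hp, h⟩
        · exact Or.inl ⟨hp, h⟩))
  obtain ⟨p, hp1, hp2⟩ := this.nonempty
  refine ⟨p, hp1, fun q hq => ?_⟩
  simp only [mem_iUnion, not_exists] at hp2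
  have := hp2 q hq
  simp only [mem_union, mem_setOf_eq, not_or, not_not] at this
  exact this

lemma exists_seq {F : Type*} [Field F] (B : ℕ → ℕ → F)
    (hR : ∀ i, {j | B i j ≠ 0}.Finite) (hC : ∀ j, {i | B i j ≠ 0}.Finite)
    (hS : {p : ℕ × ℕ | B p.1 p.2 ≠ 0}.Infinite) :
    ∃ f : ℕ → ℕ × ℕ, ∀ n, B (f n).1 (f n).2 ≠ 0 ∧
      ∀ m, m < n → B (f n).1 (f m).2 = 0 ∧ B (f m).1 (f n).2 = 0 := by
  have hstep := step_pick B hR hC hS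
  choose pick hpick1 hpick2 using hstep
  let g : ℕ → Finset (ℕ × ℕ) := fun n => Nat.rec ∅ (fun _ T => insert (pick T) T) n
  have hg : ∀ n, g (n + 1) = insert (pick (g n)) (g n) := fun n => rfl
  set f : ℕ → ℕ × ℕ := fun n => pick (g n) with hf
  have hmem : ∀ m n, m < n → f m ∈ g n := by
    intro m n
    induction n with
    | zero => omega
    | succ k ih =>
      intro h
      rw [hg]
      rcases Nat.lt_succ_iff_lt_or_eq.mp h with h' | h'
      · exact Finset.mem_insert_of_mem (ih h')
      · subst h'; exact Finset.mem_insert_self _ _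
  exact ⟨f, fun n => ⟨hpick1 (g n), fun m hm => hpick2 (g n) (f m) (hmem m n hm)⟩⟩

theorem stmt7 {F : Type*} [Field F] :
    {B : ℕ → ℕ → F | ∀ A C : ℕ → ℕ → F,
        ProdDef A B ∧ ProdDef B C ∧ ProdDef A (mmul B C) ∧ ProdDef (mmul A B) C} =
      {B | {p : ℕ × ℕ | B p.1 p.2 ≠ 0}.Finite} := by
  ext B
  simp only [mem_setOf_eq]
  constructor
  · -- hard direction
    intro hB
    classical
    by_contra hS
    rw [← Set.not_infinite, not_not] at hS
    -- row and column finiteness from all-ones matrices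
    have hR : ∀ i, {j | B i j ≠ 0}.Finite := by
      intro i
      have := (hB (fun _ _ => 1) (fun _ _ => 1)).2.1 i 0
      simpa using this
    have hC : ∀ j, {i | B i j ≠ 0}.Finite := by
      intro j
      have := (hB (fun _ _ => 1) (fun _ _ => 1)).1 0 j
      simpa using this
    obtain ⟨f, hfr⟩ := exists_seq B hR hC hS
    -- adversarial matrices
    set A : ℕ → ℕ → F := fun i j => if i = 0 ∧ ∃ n, (f n).1 = j then 1 else 0 with hA
    set C : ℕ → ℕ → F := fun j l => if l = 0 ∧ ∃ n, (f n).2 = j then 1 else 0 with hCdef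
    -- cross-zero: for n ≠ m, B (f n).1 (f m).2 = 0
    have hcross : ∀ n m, n ≠ m → B (f n).1 (f m).2 = 0 := by
      intro n m hnm
      rcases lt_or_gt_of_ne hnm with h | h
      · exact ((hfr m).2 n h).2
      · exact ((hfr n).2 m h).1
    -- key computation
    have hkey : ∀ m, mmul A B 0 (f m).2 = B (f m).1 (f m).2 := by
      intro m
      have : mmul A B 0 (f m).2 = ∑ᶠ j, A 0 j * B j (f m).2 := rfl
      rw [this, finsum_eq_single _ (f m).1]
      · simp only [hA]
        rw [if_pos ⟨trivial, m, rfl⟩, one_mul]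
      · intro j hj
        by_cases hAj : A 0 j = 0
        · rw [hAj, zero_mul]
        · simp only [hA, ite_eq_right_iff, not_forall] at hAj
          obtain ⟨⟨-, n, hn⟩, -⟩ := hAj
          subst hn
          rcases eq_or_ne n m with rfl | hne
          · exact absurd rfl hj
          · rw [hcross n m hne, mul_zero]
    -- the set {k | mmul A B 0 k * C k 0 ≠ 0} is infinite
    have hfin := (hB A C).2.2.2 0 0
    have hinj : Function.Injective (fun m => (f m).2) := by
      intro m n hmn
      by_contra hne
      have h1 := (hfr m).1
      have h2 := hcross m n (by simpa using hne)
      simp only at hmn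
      rw [← hmn] at h2
      exact h1 h2
    have hmemset : ∀ m, (f m).2 ∈ {k | mmul A B 0 k * C k 0 ≠ 0} := by
      intro m
      simp only [mem_setOf_eq, hkey m, hCdef]
      rw [if_pos ⟨trivial, m, rfl⟩, mul_one]
      exact (hfr m).1
    exact (Set.infinite_of_injective_forall_mem hinj hmemset) hfin
  · -- easy direction
    intro hfin A C
    have hRimg : (Prod.fst '' {p : ℕ × ℕ | B p.1 p.2 ≠ 0}).Finite := hfin.image _
    have hCimg : (Prod.snd '' {p : ℕ × ℕ | B p.1 p.2 ≠ 0}).Finite := hfin.image _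
    have hrow0 : ∀ j, (∀ m, B j m = 0) ∨ j ∈ Prod.fst '' {p : ℕ × ℕ | B p.1 p.2 ≠ 0} := by
      intro j
      by_cases h : ∀ m, B j m = 0
      · exact Or.inl h
      · push_neg at h
        obtain ⟨m, hm⟩ := h
        exact Or.inr ⟨(j, m), hm, rfl⟩
    have hcol0 : ∀ k, (∀ j, B j k = 0) ∨ k ∈ Prod.snd '' {p : ℕ × ℕ | B p.1 p.2 ≠ 0} := by
      intro k
      by_cases h : ∀ j, B j k = 0
      · exact Or.inl h
      · push_neg at h
        obtain ⟨j, hj⟩ := h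
        exact Or.inr ⟨(j, k), hj, rfl⟩
    refine ⟨?_, ?_, ?_, ?_⟩
    · intro i k
      refine hRimg.subset (fun j hj => ?_)
      rcases hrow0 j with h | h
      · exact absurd (by rw [h k, mul_zero]) hj
      · exact h
    · intro i k
      refine hCimg.subset (fun j hj => ?_)
      rcases hcol0 j with h | h
      · exact absurd (by rw [h i, zero_mul]) hj
      · exact h
    · intro i k
      refine hRimg.subset (fun j hj => ?_)
      rcases hrow0 j with h | h
      · have : mmul B C j k = 0 := by
          have : ∀ m, B j m * C m k = 0 := fun m => by rw [h m, zero_mul]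
          exact finsum_eq_zero_of_forall_eq_zero this
        exact absurd (by rw [this, mul_zero]) hj
      · exact h
    · intro i l
      refine hCimg.subset (fun k hk => ?_)
      rcases hcol0 k with h | h
      · have : mmul A B i k = 0 := by
          have : ∀ j, A i j * B j k = 0 := fun j => by rw [h j, mul_zero]
          exact finsum_eq_zero_of_forall_eq_zero this
        exact absurd (by rw [this, zero_mul]) hk
      · exact h
end

section
/- If B is an infinite matrix that is row and column finite but has infinite support, then there exist infinite matrices A and C such that AB and BC are defined but A(BC) or (AB)C is not defined. -/
open Set

section Aux

variable {F : Type*} [Field F]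

lemma rows_inf (B : ℕ → ℕ → F) (hrow : RowFin B)
    (hinf : {p : ℕ × ℕ | B p.1 p.2 ≠ 0}.Infinite) :
    {i | ∃ j, B i j ≠ 0}.Infinite := by
  intro hfin
  apply hinf
  have hsub : {p : ℕ × ℕ | B p.1 p.2 ≠ 0} ⊆
      ⋃ i ∈ {i | ∃ j, B i j ≠ 0}, (fun j => (i, j)) '' {j | B i j ≠ 0} := by
    rintro ⟨i, j⟩ hp
    simp only [mem_iUnion]
    exact ⟨i, ⟨j, hp⟩, j, hp, rfl⟩
  exact Set.Finite.subset (Set.Finite.biUnion hfin (fun i _ => (hrow i).image _)) hsub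

lemma key (B : ℕ → ℕ → F) (hrow : RowFin B) (hcol : ColFin B)
    (hinf : {p : ℕ × ℕ | B p.1 p.2 ≠ 0}.Infinite) (T : Finset ℕ) :
    ∃ i, (∃ j, B i j ≠ 0) ∧ ∀ i' ∈ T, ∀ j, B i' j ≠ 0 → B i j = 0 := by
  have hbad : (⋃ i' ∈ (T : Set ℕ), ⋃ j ∈ {j | B i' j ≠ 0}, {i | B i j ≠ 0}).Finite :=
    Set.Finite.biUnion T.finite_toSet
      (fun i' _ => Set.Finite.biUnion (hrow i') (fun j _ => hcol j))
  obtain ⟨i, hi⟩ := ((rows_inf B hrow hinf).diff hbad).nonempty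
  refine ⟨i, hi.1, ?_⟩
  intro i' hi' j hj
  by_contra hB
  apply hi.2
  simp only [mem_iUnion]
  exact ⟨i', hi', j, hj, hB⟩

variable (B : ℕ → ℕ → F) (hrow : RowFin B) (hcol : ColFin B)
    (hinf : {p : ℕ × ℕ | B p.1 p.2 ≠ 0}.Infinite)

noncomputable def seqT : ℕ → Finset ℕ
  | 0 => ∅
  | n+1 => insert (Classical.choose (key B hrow hcol hinf (seqT n))) (seqT n)

noncomputable def iseq (n : ℕ) : ℕ :=
  Classical.choose (key B hrow hcol hinf (seqT B hrow hcol hinf n))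

lemma ispec (n : ℕ) :
    (∃ j, B (iseq B hrow hcol hinf n) j ≠ 0) ∧
      ∀ i' ∈ seqT B hrow hcol hinf n, ∀ j, B i' j ≠ 0 → B (iseq B hrow hcol hinf n) j = 0 :=
  Classical.choose_spec (key B hrow hcol hinf (seqT B hrow hcol hinf n))

lemma mem_seqT {m n : ℕ} (h : m < n) : iseq B hrow hcol hinf m ∈ seqT B hrow hcol hinf n := by
  induction n with
  | zero => omega
  | succ n ih =>
    rw [seqT]
    rcases Nat.lt_succ_iff_lt_or_eq.mp h with h' | h'
    · exact Finset.mem_insert_of_mem (ih h')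
    · subst h'; exact Finset.mem_insert_self _ _

lemma disj {m n : ℕ} (h : m < n) (j : ℕ) (hj : B (iseq B hrow hcol hinf m) j ≠ 0) :
    B (iseq B hrow hcol hinf n) j = 0 :=
  (ispec B hrow hcol hinf n).2 _ (mem_seqT B hrow hcol hinf h) j hj

lemma disj' {m n : ℕ} (h : m ≠ n) (j : ℕ) (hj : B (iseq B hrow hcol hinf m) j ≠ 0) :
    B (iseq B hrow hcol hinf n) j = 0 := by
  rcases lt_or_gt_of_ne h with h' | h'
  · exact disj B hrow hcol hinf h' j hj
  · by_contra hc
    exact hj (disj B hrow hcol hinf h' j hc)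

noncomputable def jseq (n : ℕ) : ℕ :=
  Classical.choose (ispec B hrow hcol hinf n).1

lemma jspec (n : ℕ) : B (iseq B hrow hcol hinf n) (jseq B hrow hcol hinf n) ≠ 0 :=
  Classical.choose_spec (ispec B hrow hcol hinf n).1

lemma iseq_inj : Function.Injective (iseq B hrow hcol hinf) := by
  intro m n h
  by_contra hne
  have h1 : B (iseq B hrow hcol hinf n) (jseq B hrow hcol hinf m) = 0 :=
    disj' B hrow hcol hinf hne _ (jspec B hrow hcol hinf m)
  have h2 : B (iseq B hrow hcol hinf n) (jseq B hrow hcol hinf m) ≠ 0 := by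
    rw [← h]; exact jspec B hrow hcol hinf m
  exact h2 h1

lemma jseq_inj : Function.Injective (jseq B hrow hcol hinf) := by
  intro m n h
  by_contra hne
  have h1 : B (iseq B hrow hcol hinf n) (jseq B hrow hcol hinf m) = 0 :=
    disj' B hrow hcol hinf hne _ (jspec B hrow hcol hinf m)
  rw [h] at h1
  exact jspec B hrow hcol hinf n h1

end Aux

theorem stmt8 {F : Type*} [Field F] (B : ℕ → ℕ → F)
    (hrow : RowFin B) (hcol : ColFin B)
    (hinf : {p : ℕ × ℕ | B p.1 p.2 ≠ 0}.Infinite) :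
    ∃ A C : ℕ → ℕ → F, ProdDef A B ∧ ProdDef B C ∧
      (¬ ProdDef A (mmul B C) ∨ ¬ ProdDef (mmul A B) C) := by
  classical
  set I : ℕ → ℕ := iseq B hrow hcol hinf with hI
  set J : ℕ → ℕ := jseq B hrow hcol hinf with hJ
  set A : ℕ → ℕ → F := fun i _ => if i = 0 then 1 else 0 with hA
  set C : ℕ → ℕ → F := fun j k =>
    if h : k = 0 ∧ ∃ n, J n = j then (B (I h.2.choose) j)⁻¹ else 0 with hC
  have hCval : ∀ n, C (J n) 0 = (B (I n) (J n))⁻¹ := by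
    intro n
    have hex : (0 : ℕ) = 0 ∧ ∃ m, J m = J n := ⟨rfl, n, rfl⟩
    have : C (J n) 0 = (B (I hex.2.choose) (J n))⁻¹ := dif_pos hex
    rw [this, jseq_inj B hrow hcol hinf hex.2.choose_spec]
  have hCzero : ∀ j k, C j k ≠ 0 → k = 0 ∧ ∃ n, J n = j := by
    intro j k hjk
    by_contra h
    apply hjk
    rw [hC]; exact dif_neg h
  have hBC : ∀ n, mmul B C (I n) 0 = 1 := by
    intro n
    have heq : ∑ᶠ j, B (I n) j * C j 0 = B (I n) (J n) * C (J n) 0 := by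
      apply finsum_eq_single
      intro j hj
      by_contra hne
      have hB : B (I n) j ≠ 0 := fun h => hne (by rw [h, zero_mul])
      have hCne : C j 0 ≠ 0 := fun h => hne (by rw [h, mul_zero])
      obtain ⟨-, m, hm⟩ := hCzero j 0 hCne
      have : m = n := by
        by_contra hmn
        exact hB (hm ▸ disj' B hrow hcol hinf hmn _ (jspec B hrow hcol hinf m))
      exact hj (by rw [← hm, this])
    rw [mmul, heq, hCval n, mul_inv_cancel₀ (jspec B hrow hcol hinf n)]
  refine ⟨A, C, ?_, ?_, Or.inl ?_⟩
  · intro i k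
    apply (hcol k).subset
    intro j hj
    exact fun hb => hj (by simp [hb])
  · intro i k
    apply (hrow i).subset
    intro j hj
    exact fun hb => hj (by simp [hb])
  · intro hpd
    refine Set.infinite_of_injective_forall_mem (f := I)
      (iseq_inj B hrow hcol hinf) ?_ (hpd 0 0)
    intro n
    simp only [mem_setOf_eq, hA, if_pos rfl, one_mul]
    rw [hBC n]
    exact one_ne_zero
end

section
/- If A is a row finite infinite matrix and C is a column finite infinite matrix, then for every infinite matrix B, the products AB, BC, A(BC), (AB)C are all defined and A(BC) = (AB)C. -/
open Set

theorem stmt9 {F : Type*} [Field F] (A C : ℕ → ℕ → F)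
    (hA : RowFin A) (hC : ColFin C) (B : ℕ → ℕ → F) :
    ProdDef A B ∧ ProdDef B C ∧ ProdDef A (mmul B C) ∧ ProdDef (mmul A B) C ∧
      mmul A (mmul B C) = mmul (mmul A B) C := by
  refine ⟨?_, ?_, ?_, ?_, ?_⟩
  · intro i k
    exact (hA i).subset fun j hj => by
      simp only [mem_setOf_eq] at *; exact fun h => hj (by simp [h])
  · intro i k
    exact (hC k).subset fun j hj => by
      simp only [mem_setOf_eq] at *; exact fun h => hj (by simp [h])
  · intro i k
    exact (hA i).subset fun j hj => by
      simp only [mem_setOf_eq] at *; exact fun h => hj (by simp [h])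
  · intro i k
    exact (hC k).subset fun j hj => by
      simp only [mem_setOf_eq] at *; exact fun h => hj (by simp [h])
  · funext i l
    set S := (hA i).toFinset with hS
    set T := (hC l).toFinset with hT
    have hmem_S : ∀ j, j ∉ S → A i j = 0 := by
      intro j hj; by_contra h; exact hj (by simp [hS, h])
    have hmem_T : ∀ k, k ∉ T → C k l = 0 := by
      intro k hk; by_contra h; exact hk (by simp [hT, h])
    have lhs : mmul A (mmul B C) i l = ∑ j ∈ S, A i j * ∑ k ∈ T, B j k * C k l := by
      rw [show mmul A (mmul B C) i l = ∑ᶠ j, A i j * mmul B C j l from rfl]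
      rw [finsum_eq_finset_sum_of_support_subset _ (fun j hj => by
        by_contra h
        exact hj (by simp [mul_eq_zero, hmem_S j h] at *))]
      refine Finset.sum_congr rfl fun j _ => ?_
      congr 1
      rw [show mmul B C j l = ∑ᶠ k, B j k * C k l from rfl]
      exact finsum_eq_finset_sum_of_support_subset _ (fun k hk => by
        by_contra h
        exact hk (by simp [mul_eq_zero, hmem_T k h] at *))
    have rhs : mmul (mmul A B) C i l = ∑ k ∈ T, (∑ j ∈ S, A i j * B j k) * C k l := by
      rw [show mmul (mmul A B) C i l = ∑ᶠ k, mmul A B i k * C k l from rfl]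
      rw [finsum_eq_finset_sum_of_support_subset _ (fun k hk => by
        by_contra h
        exact hk (by simp [mul_eq_zero, hmem_T k h] at *))]
      refine Finset.sum_congr rfl fun k _ => ?_
      congr 1
      rw [show mmul A B i k = ∑ᶠ j, A i j * B j k from rfl]
      exact finsum_eq_finset_sum_of_support_subset _ (fun j hj => by
        by_contra h
        exact hj (by simp [mul_eq_zero, hmem_S j h] at *))
    rw [lhs, rhs]
    simp only [Finset.mul_sum, Finset.sum_mul, mul_assoc]
    exact Finset.sum_comm
end

section
/- If the products AB and BC are both defined and the family {A_{*j}·b_{jk}·C_{k*} : j,k ∈ ℤ⁺} is summable (condition (D)), then A(BC) and (AB)C are both defined and A(BC) = (AB)C. -/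
open Set

/-!
Both `A (B C)` and `(A B) C` are iterated sums of the double family `A i j * B j k * C k l`,
which condition (D) makes finitely supported, so they agree by swapping the order of summation.
Both products are defined because the supports of their summands are projections of the
support of that family.
-/

open Function

section Finsum

variable {α β M : Type*} [AddCommMonoid M]

theorem support_finsum_right_subset (f : α → β → M) :
    support (fun a => ∑ᶠ b, f a b) ⊆ Prod.fst '' support (uncurry f) := by
  intro a ha
  obtain ⟨b, hb⟩ : ∃ b, f a b ≠ 0 := by
    by_contra! h
    exact ha (finsum_eq_zero_of_forall_eq_zero h)
  exact ⟨(a, b), hb, rfl⟩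

theorem support_finsum_left_subset (f : α → β → M) :
    support (fun b => ∑ᶠ a, f a b) ⊆ Prod.snd '' support (uncurry f) := by
  intro b hb
  obtain ⟨a, ha⟩ : ∃ a, f a b ≠ 0 := by
    by_contra! h
    exact hb (finsum_eq_zero_of_forall_eq_zero h)
  exact ⟨(a, b), ha, rfl⟩

theorem finsum_comm (f : α → β → M) (hf : (support (uncurry f)).Finite) :
    ∑ᶠ a, ∑ᶠ b, f a b = ∑ᶠ b, ∑ᶠ a, f a b := by
  have hf' : (support fun p : β × α => f p.2 p.1).Finite :=
    (hf.image Prod.swap).subset fun p hp => ⟨p.swap, hp, rfl⟩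
  calc ∑ᶠ a, ∑ᶠ b, f a b = ∑ᶠ p : α × β, f p.1 p.2 := (finsum_curry (uncurry f) hf).symm
    _ = ∑ᶠ q : β × α, f q.2 q.1 := (finsum_comp_equiv (Equiv.prodComm β α)).symm
    _ = ∑ᶠ b, ∑ᶠ a, f a b := finsum_curry _ hf'

end Finsum

section InfiniteMatrix

variable {F : Type*} [Field F] (A B C : ℕ → ℕ → F)

-- No finiteness is needed: in a field, multiplying by a nonzero `A i j` preserves the support of
-- the inner sum, so the junk value `0` of an infinite `finsum` appears on both sides.
theorem mul_mmul_apply (i j l : ℕ) : A i j * mmul B C j l = ∑ᶠ k, A i j * B j k * C k l := by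
  simp only [mmul, mul_finsum, mul_assoc]

theorem mmul_apply_mul (i k l : ℕ) : mmul A B i k * C k l = ∑ᶠ j, A i j * B j k * C k l := by
  simp only [mmul, finsum_mul]

variable {A B C}

theorem CondD.prodDef_mmul (hD : CondD A B C) : ProdDef A (mmul B C) := fun i l =>
  ((hD i l).image Prod.fst).subset fun j hj =>
    support_finsum_right_subset (fun j k => A i j * B j k * C k l)
      (mem_support.2 <| by simpa only [mem_ofPred_eq, mul_mmul_apply] using hj)

theorem CondD.mmul_prodDef (hD : CondD A B C) : ProdDef (mmul A B) C := fun i l =>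
  ((hD i l).image Prod.snd).subset fun k hk =>
    support_finsum_left_subset (fun j k => A i j * B j k * C k l)
      (mem_support.2 <| by simpa only [mem_ofPred_eq, mmul_apply_mul] using hk)

theorem CondD.mmul_assoc (hD : CondD A B C) : mmul A (mmul B C) = mmul (mmul A B) C := by
  funext i l
  calc mmul A (mmul B C) i l = ∑ᶠ j, ∑ᶠ k, A i j * B j k * C k l :=
        finsum_congr fun j => mul_mmul_apply A B C i j l
    _ = ∑ᶠ k, ∑ᶠ j, A i j * B j k * C k l := finsum_comm _ (hD i l)
    _ = mmul (mmul A B) C i l := finsum_congr fun k => (mmul_apply_mul A B C i k l).symm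

end InfiniteMatrix

theorem stmt15_general {F : Type*} [Field F] (A B C : ℕ → ℕ → F)
    (hD : CondD A B C) :
    ProdDef A (mmul B C) ∧ ProdDef (mmul A B) C ∧
      mmul A (mmul B C) = mmul (mmul A B) C :=
  ⟨hD.prodDef_mmul, hD.mmul_prodDef, hD.mmul_assoc⟩

theorem stmt15 {F : Type*} [Field F] (A B C : ℕ → ℕ → F)
    (hAB : ProdDef A B) (hBC : ProdDef B C) (hD : CondD A B C) :
    ProdDef A (mmul B C) ∧ ProdDef (mmul A B) C ∧
      mmul A (mmul B C) = mmul (mmul A B) C :=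
  stmt15_general A B C hD
end

section
/- If A and B are both row finite infinite matrices, then for every infinite matrix C, all products AB, BC, A(BC), (AB)C are defined and A(BC) = (AB)C. Dually, if B and C are both column finite, then for every infinite matrix A, A(BC) = (AB)C. -/
open Set

section aux

variable {F : Type*} [Field F]

def tr (A : ℕ → ℕ → F) : ℕ → ℕ → F := fun i j => A j i

lemma tr_mmul (A B : ℕ → ℕ → F) : tr (mmul A B) = mmul (tr B) (tr A) := by
  funext k i
  simp only [tr, mmul, mul_comm]

lemma prodDef_tr {A B : ℕ → ℕ → F} (h : ProdDef A B) : ProdDef (tr B) (tr A) := by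
  intro k i
  have := h i k
  convert this using 2 with j
  simp [tr, mul_comm]

lemma rowFin_tr {A : ℕ → ℕ → F} (h : ColFin A) : RowFin (tr A) := h

lemma main_part (A B : ℕ → ℕ → F) (hA : RowFin A) (hB : RowFin B) (C : ℕ → ℕ → F) :
    ProdDef A B ∧ ProdDef B C ∧ ProdDef A (mmul B C) ∧ ProdDef (mmul A B) C ∧
      mmul A (mmul B C) = mmul (mmul A B) C := by
  have hAB : ProdDef A B := fun i k =>
    (hA i).subset (fun j hj => by simp only [mem_setOf_eq] at *; exact fun h => hj (by simp [h]))
  have hBC : ProdDef B C := fun i k =>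
    (hB i).subset (fun j hj => by simp only [mem_setOf_eq] at *; exact fun h => hj (by simp [h]))
  have hABC : ProdDef A (mmul B C) := fun i k =>
    (hA i).subset (fun j hj => by simp only [mem_setOf_eq] at *; exact fun h => hj (by simp [h]))
  -- finite sets
  have key : ∀ i,
      {k : ℕ | mmul A B i k ≠ 0} ⊆ ↑(((hA i).toFinset).biUnion (fun j => (hB j).toFinset)) := by
    intro i k hk
    simp only [mem_setOf_eq, mmul] at hk
    by_contra hknot
    apply hk
    apply finsum_eq_zero_of_forall_eq_zero
    intro j
    by_contra hj
    apply hknot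
    simp only [Finset.coe_biUnion, Set.mem_iUnion, Finset.mem_coe, Set.Finite.mem_toFinset]
    exact ⟨j, by simpa using left_ne_zero_of_mul hj, by simpa using right_ne_zero_of_mul hj⟩
  have hABfin : RowFin (mmul A B) := by
    intro i
    exact (Set.Finite.subset (Finset.finite_toSet _) (key i))
  have hABC2 : ProdDef (mmul A B) C := fun i k =>
    (hABfin i).subset (fun j hj => by
      simp only [mem_setOf_eq] at *; exact fun h => hj (by simp [h]))
  refine ⟨hAB, hBC, hABC, hABC2, ?_⟩
  funext i l
  set S : Finset ℕ := (hA i).toFinset with hS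
  set T : Finset ℕ := S.biUnion (fun j => (hB j).toFinset) with hT
  have hLHS : mmul A (mmul B C) i l = ∑ j ∈ S, A i j * mmul B C j l := by
    apply finsum_eq_finset_sum_of_support_subset
    intro j hj
    simp only [Function.mem_support] at hj
    simp only [hS, Set.Finite.coe_toFinset, mem_setOf_eq]
    exact left_ne_zero_of_mul hj
  have hinner : ∀ j ∈ S, mmul B C j l = ∑ k ∈ T, B j k * C k l := by
    intro j hjS
    apply finsum_eq_finset_sum_of_support_subset
    intro k hk
    simp only [Function.mem_support] at hk
    simp only [hT, Finset.coe_biUnion, Set.mem_iUnion, Finset.mem_coe,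
      Set.Finite.mem_toFinset]
    exact ⟨j, by simpa [hS, Set.Finite.mem_toFinset] using hjS, left_ne_zero_of_mul hk⟩
  have hRHS : mmul (mmul A B) C i l = ∑ k ∈ T, mmul A B i k * C k l := by
    apply finsum_eq_finset_sum_of_support_subset
    intro k hk
    simp only [Function.mem_support] at hk
    exact key i (left_ne_zero_of_mul hk)
  have hABval : ∀ k, mmul A B i k = ∑ j ∈ S, A i j * B j k := by
    intro k
    apply finsum_eq_finset_sum_of_support_subset
    intro j hj
    simp only [Function.mem_support] at hj
    simp only [hS, Set.Finite.coe_toFinset, mem_setOf_eq]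
    exact left_ne_zero_of_mul hj
  rw [hLHS, hRHS]
  rw [Finset.sum_congr rfl (fun j hj => by rw [hinner j hj])]
  simp_rw [hABval, Finset.mul_sum, Finset.sum_mul, mul_assoc]
  exact Finset.sum_comm

end aux

theorem stmt17 {F : Type*} [Field F] :
    (∀ A B : ℕ → ℕ → F, RowFin A → RowFin B → ∀ C : ℕ → ℕ → F,
      ProdDef A B ∧ ProdDef B C ∧ ProdDef A (mmul B C) ∧ ProdDef (mmul A B) C ∧
        mmul A (mmul B C) = mmul (mmul A B) C) ∧
    (∀ B C : ℕ → ℕ → F, ColFin B → ColFin C → ∀ A : ℕ → ℕ → F,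
      ProdDef A B ∧ ProdDef B C ∧ ProdDef A (mmul B C) ∧ ProdDef (mmul A B) C ∧
        mmul A (mmul B C) = mmul (mmul A B) C) := by
  constructor
  · exact main_part
  · intro B C hB hC A
    obtain ⟨h1, h2, h3, h4, h5⟩ := main_part (tr C) (tr B) (rowFin_tr hC) (rowFin_tr hB) (tr A)
    refine ⟨?_, ?_, ?_, ?_, ?_⟩
    · intro i k
      have h := h2 k i
      convert h using 2
      ext j
      simp [tr, mul_comm]
    · intro i k
      have h := h1 k i
      convert h using 2
      ext j
      simp [tr, mul_comm]
    · intro i k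
      have h := h4 k i
      rw [← tr_mmul] at h
      convert h using 2
      ext j
      simp [tr, mul_comm]
    · intro i k
      have h := h3 k i
      rw [← tr_mmul] at h
      convert h using 2
      ext j
      simp [tr, mul_comm]
    · have l1 : tr (mmul A (mmul B C)) = mmul (mmul (tr C) (tr B)) (tr A) := by
        rw [tr_mmul, tr_mmul]
      have l2 : tr (mmul (mmul A B) C) = mmul (tr C) (mmul (tr B) (tr A)) := by
        rw [tr_mmul, tr_mmul]
      have key2 : tr (mmul A (mmul B C)) = tr (mmul (mmul A B) C) := by
        rw [l1, l2, h5]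
      funext i l
      exact congrFun (congrFun key2 l) i
end

section
/- If U and A are infinite matrices such that UA is defined, V is a row finite infinite matrix with VU defined and (VU) equal to the identity matrix, and a is an infinite column vector satisfying (UA)a = Ub (with Ub defined), then Aa = b, provided Aa is defined. More precisely: under these hypotheses, if a solves (UA)v = Ub then a solves Av = b. -/
open Set

/-- Matrix-vector product definedness. -/
def MVDef {F : Type*} [Field F] (X : ℕ → ℕ → F) (v : ℕ → F) : Prop :=
  ∀ i, {j | X i j * v j ≠ 0}.Finite

noncomputable def mvmul {F : Type*} [Field F] (X : ℕ → ℕ → F) (v : ℕ → F) : ℕ → F :=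
  fun i => ∑ᶠ j, X i j * v j

open Function

theorem finsum_comm_of_finite_left {α β M : Type*} [AddCommMonoid M] (f : α → β → M)
    {s : Set α} (hs : s.Finite) (hfs : ∀ a ∉ s, f a = 0) (hf : ∀ a, (support (f a)).Finite) :
    ∑ᶠ a, ∑ᶠ b, f a b = ∑ᶠ b, ∑ᶠ a, f a b := by
  lift s to Finset α using hs
  have hsupp : ∀ g : α → M, (∀ a ∉ s, g a = 0) → support g ⊆ s := fun g hg a ha =>
    by_contra fun h => ha (hg a h)
  rw [finsum_eq_sum_of_support_subset _ (hsupp _ fun a ha => by simp [hfs a ha]),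
    sum_finsum_comm _ _ fun a _ => hf a]
  refine finsum_congr fun b => (finsum_eq_sum_of_support_subset _ (hsupp _ ?_)).symm
  exact fun a ha => by simp [hfs a ha]

section InfiniteMatrix

variable {F : Type*} [Field F]

/-- Row finiteness of `V` leaves only finitely many outer indices, so the two sums may be swapped. -/
theorem mvmul_mvmul_of_rowFin {V X : ℕ → ℕ → F} {w : ℕ → F} (hV : RowFin V) (hXw : MVDef X w) :
    mvmul V (mvmul X w) = mvmul (mmul V X) w := by
  funext i
  simp only [mvmul, mmul, mul_finsum, finsum_mul, mul_assoc]
  refine finsum_comm_of_finite_left _ (hV i) (fun k hk => funext fun j => ?_) fun k =>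
    (hXw k).subset fun j => right_ne_zero_of_mul
  simp [of_not_not hk]

theorem mmul_mmul_of_rowFin {V X Y : ℕ → ℕ → F} (hV : RowFin V) (hXY : ProdDef X Y) :
    mmul V (mmul X Y) = mmul (mmul V X) Y := by
  funext i k
  -- column `k` of a product `X Y` is `X` applied to column `k` of `Y`
  exact congrFun (mvmul_mvmul_of_rowFin hV fun i => hXY i k) i

theorem delta_mvmul (w : ℕ → F) : mvmul (fun i j => if i = j then (1 : F) else 0) w = w := by
  funext i
  rw [mvmul, finsum_eq_single _ i fun j hj => by simp [Ne.symm hj]]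
  simp

theorem delta_mmul (A : ℕ → ℕ → F) : mmul (fun i j => if i = j then (1 : F) else 0) A = A := by
  funext i k
  exact congrFun (delta_mvmul fun j => A j k) i

end InfiniteMatrix

theorem stmt19_general {F : Type*} [Field F] (U A V : ℕ → ℕ → F) (a b : ℕ → F)
    (hUA : ProdDef U A) (hV : RowFin V)
    (hI : mmul V U = fun i j => if i = j then (1 : F) else 0)
    (hUb : MVDef U b) (hUAa : MVDef (mmul U A) a)
    (hsol : mvmul (mmul U A) a = mvmul U b) :
    mvmul A a = b :=
  calc mvmul A a = mvmul (mmul (mmul V U) A) a := by rw [hI, delta_mmul]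
    _ = mvmul V (mvmul (mmul U A) a) := by
      rw [← mmul_mmul_of_rowFin hV hUA, mvmul_mvmul_of_rowFin hV hUAa]
    _ = mvmul V (mvmul U b) := by rw [hsol]
    _ = b := by rw [mvmul_mvmul_of_rowFin hV hUb, hI, delta_mvmul]

theorem stmt19 {F : Type*} [Field F] (U A V : ℕ → ℕ → F) (a b : ℕ → F)
    (hUA : ProdDef U A) (hV : RowFin V) (hVU : ProdDef V U)
    (hI : mmul V U = fun i j => if i = j then (1 : F) else 0)
    (hUb : MVDef U b) (hUAa : MVDef (mmul U A) a)
    (hsol : mvmul (mmul U A) a = mvmul U b)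
    (hAa : MVDef A a) :
    mvmul A a = b :=
  stmt19_general U A V a b hUA hV hI hUb hUAa hsol
end
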